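/- The five points M, C̄, P₁, P₂, P₃ are concyclic: each of them satisfies K(x,y) = x² + y² − (c² cos u/(2a))·x + (c² sin u/(2b))·y − (a² + b²)/2 = 0. Moreover the center of this circle is the midpoint (M + C̄)/2, so the segment from M to C̄ is a diameter of the circle. -/

import Mathlib

/-!
On the ellipse, `K(P(t)) = c²/2 · (cos 2t − cos (t + u))`, which vanishes at `t = u` (the point
`M`) and whenever `2t ≡ −(t + u) (mod 2π)`, i.e. `3t + u ∈ 2πℤ`: this is exactly the condition
defining the cusp pre-images `t₁, t₂, t₃`. That `C̄` lies on `K = 0` and is antipodal to `M` is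
a direct computation.
-/

open Real

noncomputable def ellipsePt (a b t : ℝ) : ℝ × ℝ := (a * cos t, b * sin t)

/-- The circle `K` through the cusp pre-images. -/
noncomputable def circleK (a b u : ℝ) (p : ℝ × ℝ) : ℝ :=
  p.1 ^ 2 + p.2 ^ 2 - ((a ^ 2 - b ^ 2) * cos u / (2 * a)) * p.1
    + ((a ^ 2 - b ^ 2) * sin u / (2 * b)) * p.2 - (a ^ 2 + b ^ 2) / 2

section

variable {a b : ℝ} (u : ℝ)

lemma circleK_ellipsePt (ha : a ≠ 0) (hb : b ≠ 0) (t : ℝ) :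
    circleK a b u (ellipsePt a b t) = (a ^ 2 - b ^ 2) / 2 * (cos (2 * t) - cos (t + u)) := by
  simp only [circleK, ellipsePt, mul_pow]
  rw [cos_two_mul, cos_add, sin_sq]
  field_simp
  ring

lemma circleK_ellipsePt_self (ha : a ≠ 0) (hb : b ≠ 0) :
    circleK a b u (ellipsePt a b u) = 0 := by
  rw [circleK_ellipsePt u ha hb, two_mul, sub_self, mul_zero]

lemma circleK_ellipsePt_of_three_mul_add_eq (ha : a ≠ 0) (hb : b ≠ 0) {t : ℝ} (n : ℤ)
    (ht : 3 * t + u = n * (2 * π)) :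
    circleK a b u (ellipsePt a b t) = 0 := by
  have h2t : 2 * t = n * (2 * π) - (t + u) := by linarith
  rw [circleK_ellipsePt u ha hb, h2t, cos_int_mul_two_pi_sub, sub_self, mul_zero]

lemma circleK_center_of_area (ha : a ≠ 0) (hb : b ≠ 0) :
    circleK a b u
      (-((a ^ 2 + b ^ 2) * cos u) / (2 * a), -((a ^ 2 + b ^ 2) * sin u) / (2 * b)) = 0 := by
  simp only [circleK]
  field_simp
  linear_combination (2 * a ^ 2 * b ^ 2 * (a ^ 2 + b ^ 2)) * sin_sq_add_cos_sq u

end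

/-- the five points `M, C̄, P₁, P₂, P₃` are concyclic (they lie on the circle
`K = 0`), whose center is the midpoint of `M` and `C̄`, so `M C̄` is a diameter. -/
theorem stmt5 (a b u : ℝ) (hb : 0 < b) (hab : b < a)
    (M C P₁ P₂ P₃ : ℝ × ℝ)
    (hM : M = ellipsePt a b u)
    (hC : C = (-((a ^ 2 + b ^ 2) * cos u) / (2 * a), -((a ^ 2 + b ^ 2) * sin u) / (2 * b)))
    (hP₁ : P₁ = ellipsePt a b (-u / 3))
    (hP₂ : P₂ = ellipsePt a b (-u / 3 - 2 * π / 3))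
    (hP₃ : P₃ = ellipsePt a b (-u / 3 - 4 * π / 3)) :
    circleK a b u M = 0 ∧ circleK a b u C = 0 ∧
    circleK a b u P₁ = 0 ∧ circleK a b u P₂ = 0 ∧ circleK a b u P₃ = 0 ∧
    -- the center of the circle `x² + y² + Dx + Ey + F = 0`, namely `(−D/2, −E/2)`,
    -- is the midpoint of `M` and `C̄`:
    (((a ^ 2 - b ^ 2) * cos u / (4 * a), -((a ^ 2 - b ^ 2) * sin u / (4 * b)))
        = ((M.1 + C.1) / 2, (M.2 + C.2) / 2)) := by
  have ha : a ≠ 0 := (hb.trans hab).ne'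
  have hb : b ≠ 0 := hb.ne'
  subst hM hC hP₁ hP₂ hP₃
  refine ⟨circleK_ellipsePt_self u ha hb, circleK_center_of_area u ha hb,
    circleK_ellipsePt_of_three_mul_add_eq u ha hb 0 (by push_cast; ring),
    circleK_ellipsePt_of_three_mul_add_eq u ha hb (-1) (by push_cast; ring),
    circleK_ellipsePt_of_three_mul_add_eq u ha hb (-2) (by push_cast; ring), ?_⟩
  simp only [ellipsePt, Prod.mk.injEq]
  constructor <;> field_simp <;> ring
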